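/- Let α > 0, l ∈ (0,π), and δ ≥ 0. For a ∈ [0, π−l] let J_a = δ + χ_{[a−l,a+l]} as a function on [−π,π]. Then max over a ∈ [0, π−l] of osc(u_{J_a}) equals Θ_α(l,δ). -/

import Mathlib

open MeasureTheory Real Set Filter

noncomputable def cA (α : ℝ) : ℝ := α / (1 + α * π)

noncomputable def robinG (α x y : ℝ) : ℝ :=
  -(1/2) * cA α * x * y - (1/2) * |x - y| + 1 / (2 * cA α)

/-- Solution of the Robin problem with heat source `f`. -/
noncomputable def robinSol (α : ℝ) (f : ℝ → ℝ) (x : ℝ) : ℝ :=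
  ∫ y in (-π)..π, robinG α x y * f y

/-- The class 𝔉(m,M,s) of heat sources. -/
def memF (m M s : ℝ) (f : ℝ → ℝ) : Prop :=
  MeasureTheory.IntegrableOn f (Set.Icc (-π) π) MeasureTheory.volume ∧
  (∀ᵐ x ∂(MeasureTheory.volume.restrict (Set.Icc (-π) π)), m ≤ f x ∧ f x ≤ M) ∧
  (∫ x in (-π)..π, f x) = 2 * π * s

/-- Temperature gap (oscillation) over `[-π, π]`. -/
noncomputable def osc (u : ℝ → ℝ) : ℝ :=
  sSup (u '' Set.Icc (-π) π) - sInf (u '' Set.Icc (-π) π)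

noncomputable def Hfun (α a l δ : ℝ) : ℝ :=
  (1/2) * ((1 - l * cA α)^2 / (1 + δ) - 1) * a^2 + (l / (1 + α * π)) * a
    + π * l + π^2 * δ / 2 - l^2 / 2

noncomputable def aZero (α l δ : ℝ) : ℝ :=
  (1 + δ) * l / ((1 + α * π) * (δ + 2 * l * cA α - l^2 * (cA α)^2))

noncomputable def Theta (α l δ : ℝ) : ℝ :=
  Hfun α (min (aZero α l δ) (π - l)) l δ

/-!
For the source `δ + χ_[a-l, a+l]` the Green's function integrates in closed form, `y ↦ y|y|` being
an antiderivative of `2|y|`. The solution is smallest at `x = -π`, and on the heated interval the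
rise `u(x) - u(-π)` is a concave quadratic in `x` whose maximum is `H_α(a, l, δ)`; off that
interval it is dominated by the rise, at the same point, of a translated source. As `H_α(·, l, δ)`
is a concave parabola with vertex `a_0`, its maximum over `[0, π - l]` is `Θ_α(l, δ)`, attained at
`a = min(a_0, π - l)`.
-/

noncomputable def signedSq (t : ℝ) : ℝ := t * |t|

lemma signedSq_of_nonneg {t : ℝ} (h : 0 ≤ t) : signedSq t = t ^ 2 := by
  rw [signedSq, abs_of_nonneg h]; ring

lemma signedSq_of_nonpos {t : ℝ} (h : t ≤ 0) : signedSq t = -t ^ 2 := by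
  rw [signedSq, abs_of_nonpos h]; ring

lemma signedSq_neg (t : ℝ) : signedSq (-t) = -signedSq t := by
  simp [signedSq]

lemma hasDerivAt_signedSq (t : ℝ) : HasDerivAt signedSq (2 * |t|) t := by
  rcases eq_or_ne t 0 with rfl | ht
  · rw [hasDerivAt_iff_tendsto_slope, abs_zero, mul_zero]
    have hslope : ∀ s ∈ ({0}ᶜ : Set ℝ), |s| = slope signedSq 0 s := fun s hs => by
      rw [slope_def_field, signedSq, signedSq, zero_mul, sub_zero, sub_zero,
        mul_div_cancel_left₀ _ hs]
    exact ((continuous_abs.tendsto' 0 0 abs_zero).mono_left nhdsWithin_le_nhds).congr'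
      (eventually_nhdsWithin_of_forall hslope)
  · refine ((hasDerivAt_id t).mul (hasDerivAt_abs ht)).congr_deriv ?_
    rw [id, self_mul_sign]; ring

noncomputable def robinAntideriv (c x y : ℝ) : ℝ :=
  -(c / 4) * x * y ^ 2 - signedSq (y - x) / 4 + y / (2 * c)

lemma hasDerivAt_robinAntideriv (α x y : ℝ) :
    HasDerivAt (robinAntideriv (cA α) x) (robinG α x y) y := by
  have h := (((hasDerivAt_pow 2 y).const_mul (-(cA α / 4) * x)).sub
    (((hasDerivAt_signedSq (y - x)).comp y ((hasDerivAt_id y).sub_const x)).div_const 4)).add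
    ((hasDerivAt_id y).div_const (2 * cA α))
  refine h.congr_deriv ?_
  rw [robinG, abs_sub_comm x y]
  simp only [Nat.add_one_sub_one, pow_one, mul_one]
  ring

lemma continuous_robinG (α x : ℝ) : Continuous (robinG α x) := by
  unfold robinG; fun_prop

lemma integral_robinG (α x p q : ℝ) :
    ∫ y in p..q, robinG α x y = robinAntideriv (cA α) x q - robinAntideriv (cA α) x p :=
  intervalIntegral.integral_eq_sub_of_hasDerivAt (fun y _ => hasDerivAt_robinAntideriv α x y)
    ((continuous_robinG α x).intervalIntegrable p q)

lemma robinSol_const_add_indicator (α δ x : ℝ) {p q : ℝ} (hp : -π < p) (hpq : p ≤ q)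
    (hq : q ≤ π) :
    robinSol α (fun y => δ + (Icc p q).indicator (fun _ => (1:ℝ)) y) x
      = δ * (robinAntideriv (cA α) x π - robinAntideriv (cA α) x (-π))
        + (robinAntideriv (cA α) x q - robinAntideriv (cA α) x p) := by
  have hπ : -π ≤ π := by linarith [pi_pos]
  have hind : (fun y => robinG α x y * (Icc p q).indicator (fun _ => (1:ℝ)) y)
      = (Icc p q).indicator (robinG α x) := by
    funext y
    by_cases hy : y ∈ Icc p q <;> simp [hy]
  have hint : IntervalIntegrable ((Icc p q).indicator (robinG α x)) volume (-π) π := by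
    rw [intervalIntegrable_iff_integrableOn_Ioc_of_le hπ]
    exact (continuous_robinG α x).integrableOn_Ioc.indicator measurableSet_Icc
  have hblock : ∫ y in (-π)..π, (Icc p q).indicator (robinG α x) y = ∫ y in p..q, robinG α x y := by
    rw [intervalIntegral.integral_of_le hπ, integral_indicator measurableSet_Icc,
      Measure.restrict_restrict measurableSet_Icc,
      inter_eq_self_of_subset_left (Icc_subset_Ioc hp hq), integral_Icc_eq_integral_Ioc,
      ← intervalIntegral.integral_of_le hpq]
  have hsplit : (fun y => robinG α x y * (δ + (Icc p q).indicator (fun _ => (1:ℝ)) y))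
      = fun y => δ * robinG α x y + (Icc p q).indicator (robinG α x) y := by
    rw [← hind]; funext y; ring
  rw [robinSol, hsplit, intervalIntegral.integral_add
    (((continuous_robinG α x).intervalIntegrable _ _).const_mul δ) hint,
    intervalIntegral.integral_const_mul, hblock, integral_robinG, integral_robinG]

noncomputable def gapFromLeft (c l δ a x : ℝ) : ℝ :=
  δ * (π ^ 2 - x ^ 2) / 2 - c * a * l * (x + π) + l * (a + π)
    - (signedSq (a + l - x) - signedSq (a - l - x)) / 4

lemma robinSol_sub_robinSol_neg_pi (α δ : ℝ) {a l x : ℝ} (hl : 0 ≤ l) (hal : -π < a - l)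
    (hal' : a + l ≤ π) (hx : x ∈ Icc (-π) π) :
    robinSol α (fun y => δ + (Icc (a - l) (a + l)).indicator (fun _ => (1:ℝ)) y) x
      - robinSol α (fun y => δ + (Icc (a - l) (a + l)).indicator (fun _ => (1:ℝ)) y) (-π)
      = gapFromLeft (cA α) l δ a x := by
  have hpq : a - l ≤ a + l := by linarith
  rw [robinSol_const_add_indicator α δ x hal hpq hal',
    robinSol_const_add_indicator α δ (-π) hal hpq hal']
  simp only [robinAntideriv, gapFromLeft, sub_neg_eq_add, neg_add_cancel]
  rw [show -π - x = -(π + x) by ring, signedSq_neg,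
    signedSq_of_nonneg (by linarith [hx.2] : 0 ≤ π - x),
    signedSq_of_nonneg (by linarith [hx.1] : 0 ≤ π + x),
    signedSq_of_nonneg (by linarith [pi_pos] : 0 ≤ π + π),
    signedSq_of_nonneg (by linarith : 0 ≤ a + l + π),
    signedSq_of_nonneg (by linarith : 0 ≤ a - l + π), signedSq_of_nonneg le_rfl]
  ring

noncomputable def midGap (c l δ a x : ℝ) : ℝ :=
  δ * (π ^ 2 - x ^ 2) / 2 - c * a * l * (x + π) + l * (a + π) - ((a - x) ^ 2 + l ^ 2) / 2

section gapFromLeft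

variable {c l δ a x : ℝ}

lemma gapFromLeft_of_le_sub (hl : 0 ≤ l) (hx : x ≤ a - l) :
    gapFromLeft c l δ a x = δ * (π ^ 2 - x ^ 2) / 2 + l * (x + π) * (1 - c * a) := by
  rw [gapFromLeft, signedSq_of_nonneg (by linarith), signedSq_of_nonneg (by linarith)]
  ring

lemma gapFromLeft_of_mem_Icc (hx : x ∈ Icc (a - l) (a + l)) :
    gapFromLeft c l δ a x = midGap c l δ a x := by
  rw [gapFromLeft, midGap, signedSq_of_nonneg (by linarith [hx.2]),
    signedSq_of_nonpos (by linarith [hx.1])]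
  ring

lemma gapFromLeft_of_add_le (hl : 0 ≤ l) (hx : a + l ≤ x) :
    gapFromLeft c l δ a x
      = δ * (π ^ 2 - x ^ 2) / 2 - c * a * l * (x + π) + l * (2 * a + π - x) := by
  rw [gapFromLeft, signedSq_of_nonpos (by linarith), signedSq_of_nonpos (by linarith)]
  ring

lemma midGap_le_gapFromLeft (hl : 0 ≤ l) : midGap c l δ a x ≤ gapFromLeft c l δ a x := by
  rcases le_or_gt x (a - l) with hx | hx
  · rw [gapFromLeft_of_le_sub hl hx, midGap]
    nlinarith [sq_nonneg (a - x - l)]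
  rcases le_or_gt x (a + l) with hx' | hx'
  · rw [gapFromLeft_of_mem_Icc ⟨hx.le, hx'⟩]
  · rw [gapFromLeft_of_add_le hl hx'.le, midGap]
    nlinarith [sq_nonneg (x - a - l)]

lemma gapFromLeft_nonneg (hc : 0 ≤ c) (hcπ : c * π ≤ 1) (hl : 0 ≤ l) (hδ : 0 ≤ δ)
    (ha : a ∈ Icc 0 (π - l)) (hx : x ∈ Icc (-π) π) : 0 ≤ gapFromLeft c l δ a x := by
  obtain ⟨ha₀, ha₁⟩ := ha
  obtain ⟨hx₀, hx₁⟩ := hx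
  have hδx : 0 ≤ δ * (π ^ 2 - x ^ 2) / 2 := by
    have : 0 ≤ π ^ 2 - x ^ 2 := by nlinarith
    positivity
  have hcx : c * a * l * (x + π) ≤ 2 * a * l := by
    have : c * (x + π) ≤ 2 := by nlinarith
    nlinarith [mul_nonneg ha₀ hl]
  rcases le_or_gt x (a - l) with h | h
  · rw [gapFromLeft_of_le_sub hl h]
    have : c * a ≤ 1 := by nlinarith
    have : 0 ≤ l * (x + π) * (1 - c * a) := by
      apply mul_nonneg (mul_nonneg hl _) <;> linarith
    linarith
  rcases le_or_gt x (a + l) with h' | h'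
  · rw [gapFromLeft_of_mem_Icc ⟨h.le, h'⟩, midGap]
    nlinarith [mul_nonneg hl (by linarith : 0 ≤ π - l - a)]
  · rw [gapFromLeft_of_add_le hl h'.le]
    nlinarith [mul_nonneg hl (by linarith : 0 ≤ π - x)]

/-- Translating the heated interval until it reaches `x` (or, when `x < -l`, to `a = 0`) does not
decrease the gap at `x`. -/
lemma exists_gapFromLeft_le_midGap (hc : 0 ≤ c) (hcπ : c * π ≤ 1) (hl : 0 ≤ l) (hδ : 0 ≤ δ)
    (ha : a ∈ Icc 0 (π - l)) (hx : x ∈ Icc (-π) π) :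
    ∃ b ∈ Icc 0 (π - l), ∃ y, gapFromLeft c l δ a x ≤ midGap c l δ b y := by
  obtain ⟨ha₀, ha₁⟩ := ha
  obtain ⟨hx₀, hx₁⟩ := hx
  rcases le_or_gt x (a - l) with h | h
  · rw [gapFromLeft_of_le_sub hl h]
    rcases le_or_gt (-l) x with hxl | hxl
    · refine ⟨x + l, ⟨by linarith, by linarith⟩, x, ?_⟩
      rw [midGap]
      nlinarith [mul_nonneg (mul_nonneg (mul_nonneg hc hl) (by linarith : 0 ≤ x + π))
        (by linarith : 0 ≤ a - l - x)]
    · refine ⟨0, ⟨le_rfl, by linarith⟩, -l, ?_⟩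
      rw [midGap]
      nlinarith [mul_nonneg hδ (by nlinarith : 0 ≤ x ^ 2 - l ^ 2),
        mul_nonneg (mul_nonneg hl (by linarith : 0 ≤ x + π)) (mul_nonneg hc ha₀)]
  rcases le_or_gt x (a + l) with h' | h'
  · exact ⟨a, ⟨ha₀, ha₁⟩, x, (gapFromLeft_of_mem_Icc ⟨h.le, h'⟩).le⟩
  · refine ⟨x - l, ⟨by linarith, by linarith⟩, x, ?_⟩
    rw [gapFromLeft_of_add_le hl h'.le, midGap]
    have : c * (x + π) ≤ 2 := by nlinarith
    nlinarith [mul_nonneg (mul_nonneg hl (by linarith : 0 ≤ x - l - a))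
      (by linarith : 0 ≤ 2 - c * (x + π))]

end gapFromLeft

lemma sub_mul_sq_le_sub_mul_sq_min (M : ℝ) {k v b a : ℝ} (hk : 0 ≤ k) (ha : a ≤ b) :
    M - k * (a - v) ^ 2 ≤ M - k * (min v b - v) ^ 2 := by
  have : (min v b - v) ^ 2 ≤ (a - v) ^ 2 := by
    rcases le_total v b with h | h
    · simp [min_eq_left h, sq_nonneg]
    · rw [min_eq_right h]; nlinarith
  nlinarith

section Hfun

variable {α l δ a : ℝ}

lemma cA_pos (hα : 0 < α) : 0 < cA α := div_pos hα (by positivity)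

lemma cA_mul_pi_lt_one (hα : 0 ≤ α) : cA α * π < 1 := by
  rw [cA, div_mul_eq_mul_div, div_lt_one (by positivity)]
  linarith

lemma one_sub_cA_mul_pi (hα : 0 ≤ α) : 1 - cA α * π = (1 + α * π)⁻¹ := by
  have : 0 < 1 + α * π := by positivity
  rw [cA]; field_simp; ring

lemma Hfun_sub_midGap (hα : 0 ≤ α) (hδ : 0 < 1 + δ) (x : ℝ) :
    Hfun α a l δ - midGap (cA α) l δ a x
      = ((1 + δ) * x - a * (1 - l * cA α)) ^ 2 / (2 * (1 + δ)) := by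
  rw [Hfun, midGap, div_eq_mul_inv l, ← one_sub_cA_mul_pi hα]
  field_simp; ring

lemma midGap_le_Hfun (hα : 0 ≤ α) (hδ : 0 < 1 + δ) (x : ℝ) :
    midGap (cA α) l δ a x ≤ Hfun α a l δ := by
  have := Hfun_sub_midGap (a := a) (l := l) hα hδ x
  have : 0 ≤ ((1 + δ) * x - a * (1 - l * cA α)) ^ 2 / (2 * (1 + δ)) := by positivity
  linarith

lemma midGap_eq_Hfun (hα : 0 ≤ α) (hδ : 0 < 1 + δ) :
    midGap (cA α) l δ a (a * (1 - l * cA α) / (1 + δ)) = Hfun α a l δ := by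
  have := Hfun_sub_midGap (a := a) (l := l) hα hδ (a * (1 - l * cA α) / (1 + δ))
  rw [mul_div_cancel₀ _ hδ.ne', sub_self, zero_pow two_ne_zero, zero_div] at this
  linarith

lemma aZero_eq (hα : 0 ≤ α) :
    aZero α l δ = (1 + δ) * l * (1 - cA α * π) / (δ + 2 * l * cA α - l ^ 2 * cA α ^ 2) := by
  rw [aZero, one_sub_cA_mul_pi hα, div_eq_mul_inv, div_eq_mul_inv, mul_inv]
  ring

lemma Hfun_eq_vertex_form (hα : 0 ≤ α) (hδ : 0 < 1 + δ)
    (hP : 0 < δ + 2 * l * cA α - l ^ 2 * cA α ^ 2) :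
    Hfun α a l δ = Hfun α (aZero α l δ) l δ
      - (δ + 2 * l * cA α - l ^ 2 * cA α ^ 2) / (2 * (1 + δ)) * (a - aZero α l δ) ^ 2 := by
  rw [Hfun, Hfun, aZero_eq hα, div_eq_mul_inv l (1 + α * π), ← one_sub_cA_mul_pi hα]
  generalize cA α = c at hP ⊢
  generalize 1 - c * π = q
  field_simp
  ring

lemma aZero_denom_pos (hα : 0 < α) (hl : 0 < l) (hlπ : l < π) (hδ : 0 ≤ δ) :
    0 < δ + 2 * l * cA α - l ^ 2 * cA α ^ 2 := by
  have hlc : 0 < l * cA α := mul_pos hl (cA_pos hα)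
  have : l * cA α < 1 := by
    nlinarith [cA_mul_pi_lt_one hα.le, mul_lt_mul_of_pos_right hlπ (cA_pos hα)]
  nlinarith

lemma aZero_nonneg (hα : 0 < α) (hl : 0 < l) (hlπ : l < π) (hδ : 0 ≤ δ) : 0 ≤ aZero α l δ := by
  have := aZero_denom_pos hα hl hlπ hδ
  rw [aZero]; positivity

lemma Hfun_le_Theta (hα : 0 < α) (hl : 0 < l) (hlπ : l < π) (hδ : 0 ≤ δ) (ha : a ≤ π - l) :
    Hfun α a l δ ≤ Theta α l δ := by
  have hP := aZero_denom_pos hα hl hlπ hδ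
  have hδ' : 0 < 1 + δ := by linarith
  rw [Theta, Hfun_eq_vertex_form hα.le hδ' hP,
    Hfun_eq_vertex_form (a := min _ _) hα.le hδ' hP]
  exact sub_mul_sq_le_sub_mul_sq_min _ (by positivity) ha

end Hfun

lemma osc_le {u : ℝ → ℝ} {M : ℝ} (h : ∀ x ∈ Icc (-π) π, ∀ y ∈ Icc (-π) π, u x - u y ≤ M) :
    osc u ≤ M := by
  have hne : (u '' Icc (-π) π).Nonempty := (nonempty_Icc.2 (by linarith [pi_pos])).image u
  rw [osc, sub_le_iff_le_add]
  refine csSup_le hne ?_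
  rintro _ ⟨x, hx, rfl⟩
  rw [← sub_le_iff_le_add']
  refine le_csInf hne ?_
  rintro _ ⟨y, hy, rfl⟩
  linarith [h x hx y hy]

lemma sub_le_osc {u : ℝ → ℝ} (hu : BddAbove (u '' Icc (-π) π)) (hu' : BddBelow (u '' Icc (-π) π))
    {x y : ℝ} (hx : x ∈ Icc (-π) π) (hy : y ∈ Icc (-π) π) : u x - u y ≤ osc u :=
  sub_le_sub (le_csSup hu (mem_image_of_mem u hx)) (csInf_le hu' (mem_image_of_mem u hy))

lemma Hfun_le_osc_robinSol_le_Theta {α l δ a : ℝ} (hα : 0 < α) (hl : 0 < l) (hlπ : l < π)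
    (hδ : 0 ≤ δ) (ha : a ∈ Icc 0 (π - l)) :
    Hfun α a l δ ≤ osc (robinSol α (fun x => δ + (Icc (a - l) (a + l)).indicator (fun _ => 1) x))
      ∧ osc (robinSol α (fun x => δ + (Icc (a - l) (a + l)).indicator (fun _ => 1) x))
        ≤ Theta α l δ := by
  set u := robinSol α (fun x => δ + (Icc (a - l) (a + l)).indicator (fun _ => 1) x)
  have hc := cA_pos hα
  have hcπ := (cA_mul_pi_lt_one hα.le).le
  have hδ' : 0 < 1 + δ := by linarith
  have hπ : -π ∈ Icc (-π) π := left_mem_Icc.2 (by linarith)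
  have hgap : ∀ x ∈ Icc (-π) π, u x - u (-π) = gapFromLeft (cA α) l δ a x := fun x hx =>
    robinSol_sub_robinSol_neg_pi α δ hl.le (by linarith [ha.1]) (by linarith [ha.2]) hx
  have hlow : ∀ x ∈ Icc (-π) π, u (-π) ≤ u x := fun x hx => by
    linarith [hgap x hx, gapFromLeft_nonneg hc.le hcπ hl.le hδ ha hx]
  have hup : ∀ x ∈ Icc (-π) π, u x - u (-π) ≤ Theta α l δ := fun x hx => by
    obtain ⟨b, hb, y, hy⟩ := exists_gapFromLeft_le_midGap hc.le hcπ hl.le hδ ha hx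
    rw [hgap x hx]
    exact hy.trans ((midGap_le_Hfun hα.le hδ' y).trans (Hfun_le_Theta hα hl hlπ hδ hb.2))
  constructor
  · set x := a * (1 - l * cA α) / (1 + δ)
    have hx : x ∈ Icc (-π) π := by
      have hlc : 0 ≤ 1 - l * cA α := by nlinarith [mul_le_mul_of_nonneg_right hlπ.le hc.le]
      have hx₀ : 0 ≤ x := div_nonneg (mul_nonneg ha.1 hlc) hδ'.le
      have hxa : x ≤ a := (div_le_iff₀ hδ').2 (by nlinarith [ha.1, mul_nonneg hl.le hc.le])
      constructor <;> linarith [ha.2]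
    calc Hfun α a l δ = midGap (cA α) l δ a x := (midGap_eq_Hfun hα.le hδ').symm
      _ ≤ gapFromLeft (cA α) l δ a x := midGap_le_gapFromLeft hl.le
      _ = u x - u (-π) := (hgap x hx).symm
      _ ≤ osc u := sub_le_osc ⟨u (-π) + Theta α l δ, ?_⟩ ⟨u (-π), ?_⟩ hx hπ
    all_goals rintro _ ⟨y, hy, rfl⟩
    · linarith [hup y hy]
    · exact hlow y hy
  · exact osc_le fun x hx y hy => by linarith [hup x hx, hlow y hy]

/-- Lemma 3 (maximum of the oscillation over the position `a`). -/
theorem lemma3_max_osc (α l δ : ℝ) (hα : 0 < α) (hl : l ∈ Set.Ioo 0 π) (hδ : 0 ≤ δ) :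
    IsGreatest
      ((fun a => osc (robinSol α
          (fun x => δ + (Set.Icc (a - l) (a + l)).indicator (fun _ => (1:ℝ)) x))) ''
        Set.Icc 0 (π - l))
      (Theta α l δ) := by
  obtain ⟨hl₀, hlπ⟩ := hl
  have bounds := fun a (ha : a ∈ Icc 0 (π - l)) =>
    Hfun_le_osc_robinSol_le_Theta hα hl₀ hlπ hδ ha
  have hmax : min (aZero α l δ) (π - l) ∈ Icc 0 (π - l) :=
    ⟨le_min (aZero_nonneg hα hl₀ hlπ hδ) (by linarith), min_le_right _ _⟩
  refine ⟨⟨_, hmax, le_antisymm (bounds _ hmax).2 (bounds _ hmax).1⟩, ?_⟩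
  rintro _ ⟨a, ha, rfl⟩
  exact (bounds a ha).2
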